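/- The differences of the Poisson distribution of order k satisfy, for all x ≥ 0: (x+1)(x+2)/λ · Δ_{x+2} = Σ_{j=1}^{k−1} ( j(x+1) + (λ−1)j(j+1)/2 ) Δ_{x+1−j} + ( (λ−1)k(k+1)/2 − 1 − x ) P_{x+1−k}, with P_y = Δ_y = 0 for y < 0. -/

import Mathlib

open scoped BigOperators
open Real

/-- The pmf of the Poisson distribution of order `k` with parameter `lam`,
indexed by `x : ℤ` (it vanishes for `x < 0`):
`f_k(x;λ) = Σ e^{-kλ} λ^{x₁+⋯+x_k}/(x₁!⋯x_k!)` summed over all `k`-tuples of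
nonnegative integers with `x₁ + 2x₂ + ⋯ + k x_k = x`. -/
noncomputable def poissonOrderK (k : ℕ) (lam : ℝ) (x : ℤ) : ℝ :=
  ∑' t : Fin k → ℕ,
    if ((∑ i : Fin k, ((i : ℕ) + 1) * t i : ℕ) : ℤ) = x then
      Real.exp (-(k * lam)) * lam ^ (∑ i : Fin k, t i) /
        ∏ i : Fin k, (Nat.factorial (t i) : ℝ)
    else 0

/-- The difference `Δ_x = P_x - P_{x-1}`. -/
noncomputable def deltaOrderK (k : ℕ) (lam : ℝ) (x : ℤ) : ℝ :=
  poissonOrderK k lam x - poissonOrderK k lam (x - 1)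


/-!
Writing `P_n` as a sum over tuples `t : Fin k → ℕ` of weight `Σ (i + 1) tᵢ = n`, the identity
`(tᵢ + 1) · term(t + eᵢ) = λ · term(t)` gives `n P_n = λ Σ_{i=1}^k i P_{n-i}` for every integer
`n`. The difference identity follows from this recurrence alone: combine it at `n = x + 1` and
`n = x + 2`, and turn the sums of `P` into sums of `Δ` by summation by parts.
-/

open Finset
open scoped Nat

theorem sum_range_add_one_eq_sum_Icc {M : Type*} [AddCommMonoid M] (g : ℕ → M) (k : ℕ) :
    ∑ i ∈ range k, g (i + 1) = ∑ i ∈ Icc 1 k, g i := by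
  rw [range_eq_Ico, sum_Ico_add', ← Ico_add_one_right_eq_Icc]

namespace PoissonOrderK

variable {k : ℕ}

def weight (t : Fin k → ℕ) : ℕ := ∑ i : Fin k, ((i : ℕ) + 1) * t i

noncomputable def term (k : ℕ) (lam : ℝ) (t : Fin k → ℕ) : ℝ :=
  exp (-(k * lam)) * lam ^ (∑ i : Fin k, t i) / ∏ i : Fin k, ((t i)! : ℝ)

theorem poissonOrderK_eq_tsum (lam : ℝ) (n : ℤ) :
    poissonOrderK k lam n = ∑' t : Fin k → ℕ, if (weight t : ℤ) = n then term k lam t else 0 :=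
  rfl

theorem le_weight (t : Fin k → ℕ) (i : Fin k) : t i ≤ weight t :=
  calc t i ≤ ((i : ℕ) + 1) * t i := Nat.le_mul_of_pos_left _ i.val.succ_pos
    _ ≤ weight t := single_le_sum (f := fun j : Fin k => ((j : ℕ) + 1) * t j)
        (fun _ _ => Nat.zero_le _) (mem_univ i)

theorem finite_setOf_weight_eq (n : ℤ) : {t : Fin k → ℕ | (weight t : ℤ) = n}.Finite :=
  (Set.finite_Iic fun _ => n.toNat).subset fun t (ht : (weight t : ℤ) = n) i => by
    show t i ≤ n.toNat
    have := le_weight t i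
    omega

theorem weight_add_single (t : Fin k → ℕ) (i : Fin k) :
    weight (t + Pi.single i 1) = weight t + ((i : ℕ) + 1) := by
  simp [weight, mul_add, sum_add_distrib, Pi.single_apply]

theorem prod_factorial_add_single (t : Fin k → ℕ) (i : Fin k) :
    ∏ j, (((t + Pi.single i 1 : Fin k → ℕ) j)! : ℝ) = (t i + 1) * ∏ j, ((t j)! : ℝ) := by
  have h : ∀ j, (((t + Pi.single i 1 : Fin k → ℕ) j)! : ℝ)
      = ((t j)! : ℝ) * if j = i then (t i + 1 : ℝ) else 1 := by
    intro j
    rcases eq_or_ne j i with rfl | hj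
    · simp [Nat.factorial_succ, mul_comm]
    · simp [hj]
  rw [Fintype.prod_congr _ _ h, prod_mul_distrib, prod_ite_eq']
  simp [mul_comm]

theorem coord_add_one_mul_term_add_single (lam : ℝ) (t : Fin k → ℕ) (i : Fin k) :
    ((t i : ℝ) + 1) * term k lam (t + Pi.single i 1) = lam * term k lam t := by
  have hsum : ∑ j, (t + Pi.single i 1 : Fin k → ℕ) j = ∑ j, t j + 1 := by
    simp [sum_add_distrib]
  have hsucc : (t i + 1 : ℝ) ≠ 0 := by positivity
  have hprod : ∏ j, ((t j)! : ℝ) ≠ 0 := by positivity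
  rw [term, term, hsum, prod_factorial_add_single, pow_succ]
  field_simp

theorem tsum_coord_mul_term (lam : ℝ) (n : ℤ) (i : Fin k) :
    ∑' t : Fin k → ℕ, (if (weight t : ℤ) = n then (t i : ℝ) * term k lam t else 0)
      = lam * poissonOrderK k lam (n - ((i : ℕ) + 1)) := by
  have hinj : Function.Injective fun s : Fin k → ℕ => s + Pi.single i 1 := add_left_injective _
  have hsupp : Function.support (fun t : Fin k → ℕ =>
      if (weight t : ℤ) = n then (t i : ℝ) * term k lam t else 0) ⊆
      Set.range fun s : Fin k → ℕ => s + Pi.single i 1 := by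
    intro t ht
    have hti : t i ≠ 0 := fun h => ht (by simp [h])
    refine ⟨t - Pi.single i (1 : ℕ), funext fun j => ?_⟩
    rcases eq_or_ne j i with rfl | hj
    · simp only [Pi.add_apply, Pi.sub_apply, Pi.single_eq_same]
      omega
    · simp [hj]
  rw [← hinj.tsum_eq hsupp, poissonOrderK_eq_tsum, ← tsum_mul_left]
  refine tsum_congr fun s => ?_
  rw [mul_ite, mul_zero]
  refine if_congr ?_ ?_ rfl
  · rw [weight_add_single]
    push_cast
    omega
  · simpa using coord_add_one_mul_term_add_single lam s i

theorem intCast_mul_poissonOrderK (lam : ℝ) (n : ℤ) :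
    (n : ℝ) * poissonOrderK k lam n
      = lam * ∑ i ∈ Icc 1 k, (i : ℝ) * poissonOrderK k lam (n - (i : ℤ)) := by
  set g : Fin k → (Fin k → ℕ) → ℝ :=
    fun i t => if (weight t : ℤ) = n then (t i : ℝ) * term k lam t else 0
  have hg : ∀ i, Summable (g i) := fun i =>
    summable_of_hasFiniteSupport <| (finite_setOf_weight_eq n).subset fun t ht => by
      by_contra h
      exact ht (if_neg h)
  calc (n : ℝ) * poissonOrderK k lam n
      = ∑' t, ∑ i : Fin k, ((i : ℕ) + 1 : ℝ) * g i t := by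
        rw [poissonOrderK_eq_tsum, ← tsum_mul_left]
        refine tsum_congr fun t => ?_
        simp only [g, mul_ite, mul_zero]
        split_ifs with h
        · rw [← h, weight]
          push_cast
          rw [sum_mul]
          exact sum_congr rfl fun i _ => by ring
        · simp
    _ = ∑ i : Fin k, ((i : ℕ) + 1 : ℝ) * (lam * poissonOrderK k lam (n - ((i : ℕ) + 1))) := by
        rw [Summable.tsum_finsetSum fun i _ => (hg i).mul_left _]
        simp_rw [tsum_mul_left, g, tsum_coord_mul_term]
    _ = lam * ∑ i ∈ Icc 1 k, (i : ℝ) * poissonOrderK k lam (n - (i : ℤ)) := by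
        rw [mul_sum, ← sum_range_add_one_eq_sum_Icc, ← Fin.sum_univ_eq_sum_range]
        push_cast
        exact sum_congr rfl fun i _ => by ring

end PoissonOrderK

section SummationByParts

variable (f : ℤ → ℝ) (n : ℤ)

theorem sum_Icc_mul_backwardDiff (m : ℕ) :
    ∑ j ∈ Icc 1 m, (j : ℝ) * (f (n - j) - f (n - j - 1))
      = ∑ j ∈ Icc 1 m, f (n - j) - m * f (n - (m + 1)) := by
  induction m with
  | zero => simp
  | succ m ih =>
    rw [sum_Icc_succ_top (by omega), sum_Icc_succ_top (by omega), ih]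
    push_cast
    ring_nf

theorem sum_Icc_triangle_mul_backwardDiff (m : ℕ) :
    ∑ j ∈ Icc 1 m, (j : ℝ) * (j + 1) / 2 * (f (n - j) - f (n - j - 1))
      = ∑ j ∈ Icc 1 m, j * f (n - j) - m * (m + 1) / 2 * f (n - (m + 1)) := by
  induction m with
  | zero => simp
  | succ m ih =>
    rw [sum_Icc_succ_top (by omega), sum_Icc_succ_top (by omega), ih]
    push_cast
    ring_nf

theorem sum_Icc_mul_add_one_sub (m : ℕ) :
    ∑ i ∈ Icc 1 (m + 1), (i : ℝ) * f (n + 1 - i)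
      = f n + ∑ j ∈ Icc 1 m, ((j : ℝ) + 1) * f (n - j) := by
  induction m with
  | zero => simp
  | succ m ih =>
    rw [sum_Icc_succ_top (show 1 ≤ m + 1 + 1 by omega), ih,
      sum_Icc_succ_top (show 1 ≤ m + 1 by omega)]
    push_cast
    ring_nf

end SummationByParts

theorem delta_recurrence_of_recurrence {f : ℤ → ℝ} {lam : ℝ} {k : ℕ}
    (hf : ∀ n : ℤ, (n : ℝ) * f n = lam * ∑ i ∈ Icc 1 k, (i : ℝ) * f (n - i))
    (hlam : lam ≠ 0) (hk : 0 < k) (n : ℤ) :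
    (n : ℝ) * (n + 1) / lam * (f (n + 1) - f n)
      = ∑ j ∈ Icc 1 (k - 1),
          ((j : ℝ) * n + (lam - 1) * j * (j + 1) / 2) * (f (n - j) - f (n - j - 1))
        + ((lam - 1) * k * (k + 1) / 2 - n) * f (n - k) := by
  obtain ⟨m, rfl⟩ : ∃ m, k = m + 1 := ⟨k - 1, by omega⟩
  have h₀ := hf n
  have h₁ := hf (n + 1)
  rw [sum_Icc_succ_top (by omega)] at h₀
  rw [sum_Icc_mul_add_one_sub] at h₁
  have hsplit : ∑ j ∈ Icc 1 m,
        ((j : ℝ) * n + (lam - 1) * j * (j + 1) / 2) * (f (n - j) - f (n - j - 1))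
      = n * ∑ j ∈ Icc 1 m, (j : ℝ) * (f (n - j) - f (n - j - 1))
        + (lam - 1) * ∑ j ∈ Icc 1 m, (j : ℝ) * (j + 1) / 2 * (f (n - j) - f (n - j - 1)) := by
    rw [mul_sum, mul_sum, ← sum_add_distrib]
    exact sum_congr rfl fun j _ => by ring
  have hsucc : ∑ j ∈ Icc 1 m, ((j : ℝ) + 1) * f (n - j)
      = ∑ j ∈ Icc 1 m, (j : ℝ) * f (n - j) + ∑ j ∈ Icc 1 m, f (n - j) := by
    rw [← sum_add_distrib]
    exact sum_congr rfl fun j _ => by ring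
  rw [hsucc] at h₁
  rw [Nat.add_sub_cancel, hsplit, sum_Icc_mul_backwardDiff, sum_Icc_triangle_mul_backwardDiff,
    div_mul_eq_mul_div, div_eq_iff hlam]
  push_cast at h₀ h₁ ⊢
  linear_combination (n : ℝ) * h₁ - ((n : ℝ) + 1 - lam) * h₀

theorem poissonOrderK_delta_recurrence_delta (k : ℕ) (hk : 2 ≤ k) (lam : ℝ) (hlam : 0 < lam)
    (x : ℕ) :
    ((x : ℝ) + 1) * ((x : ℝ) + 2) / lam * deltaOrderK k lam ((x : ℤ) + 2)
      = (∑ j ∈ Finset.Icc 1 (k - 1),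
          ((j : ℝ) * ((x : ℝ) + 1) + (lam - 1) * (j : ℝ) * ((j : ℝ) + 1) / 2)
            * deltaOrderK k lam ((x : ℤ) + 1 - (j : ℤ)))
        + ((lam - 1) * (k : ℝ) * ((k : ℝ) + 1) / 2 - 1 - (x : ℝ))
            * poissonOrderK k lam ((x : ℤ) + 1 - (k : ℤ)) := by
  have h := delta_recurrence_of_recurrence (k := k)
    (PoissonOrderK.intCast_mul_poissonOrderK lam) hlam.ne' (by omega) ((x : ℤ) + 1)
  push_cast at h
  rw [show (x : ℤ) + 2 = (x : ℤ) + 1 + 1 by ring, show (x : ℝ) + 2 = (x : ℝ) + 1 + 1 by ring]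
  simp only [deltaOrderK, add_sub_cancel_right]
  linear_combination h
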